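/- arXiv:2209.00113 — 2 statements merged into one kernel-verified Lean document; each statement's English description precedes it below -/
import Mathlib

section
/- Let θ ∈ (0, 1/2], let ‖·‖ be the T[θ, S_1]-norm, let i be a positive integer and A ⊆ ℕ a finite set with min A > i, |A| ≤ min A (so A ∈ S_1), |A| ≥ ⌈θ^{-1}⌉, and such that A ∪ {i} ∉ S_1 (i.e. |A| + 1 > i). Then ‖e_i + Σ_{j∈A} e_j‖ = θ·|A|. -/
/-!
Write `S = A ∪ {i}`, so that the vector is the indicator of `S` and `|S| = |A| + 1`. Splitting
`A` into singletons is S₁-admissible because `A ∈ S₁`, which gives the lower bound `θ|A|`.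
For the upper bound it suffices that every admissible sum `∑ₖ ‖E_k 1_S‖` is at most `|A|`.
If no `E_k` contains `i`, this is the trivial bound by `|A|`. If some `E_k` contains `i`, then
`d ≤ i ≤ |A|` since `A ∪ {i} ∉ S₁`: either all pieces `E_k ∩ S` have at most one point, and the sum
is at most `d`, or some piece has `m ≥ 2` points, and its norm is at most
`max 1 (θ m) ≤ m - 1` because `θ ≤ 1/2`, which saves the one unit needed.
-/

open Finset

noncomputable section

/-- Coordinate projection of a sequence onto a finite set of indices. -/
def proj (E : Finset ℕ) (x : ℕ → ℝ) : ℕ → ℝ := fun i => if i ∈ E then x i else 0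

/-- Supremum norm on finitely supported sequences. -/
def supNorm (x : ℕ → ℝ) : ℝ := ⨆ i, |x i|

/-- S₁-admissibility: consecutive nonempty finite sets E₁ < ⋯ < E_d with d ≤ min E₁. -/
def Adm1 (d : ℕ) (E : Fin d → Finset ℕ) : Prop :=
  (∀ i, (E i).Nonempty) ∧
  (∀ i j : Fin d, i < j → ∀ a ∈ E i, ∀ b ∈ E j, a < b) ∧
  (∀ i, ∀ a ∈ E i, d ≤ a)

/-- The inductive sequence of norms defining the Tsirelson-type norm. -/
def tns (θ : ℝ) : ℕ → (ℕ → ℝ) → ℝ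
  | 0 => supNorm
  | n + 1 => fun x =>
      max (tns θ n x)
        (sSup {r : ℝ | ∃ d : ℕ, ∃ E : Fin d → Finset ℕ, Adm1 d E ∧
          r = θ * ∑ i, tns θ n (proj (E i) x)})

/-- The T[θ, S₁] norm. -/
def tnorm (θ : ℝ) (x : ℕ → ℝ) : ℝ := ⨆ n, tns θ n x

def indicatorVec (S : Finset ℕ) : ℕ → ℝ := fun k => if k ∈ S then 1 else 0

theorem indicatorVec_eq_sum_single (S : Finset ℕ) :
    indicatorVec S = ∑ j ∈ S, Pi.single j (1 : ℝ) := by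
  funext k
  simp [indicatorVec, Finset.sum_apply, Pi.single_apply]

theorem proj_indicatorVec (E S : Finset ℕ) : proj E (indicatorVec S) = indicatorVec (E ∩ S) := by
  funext k
  by_cases hE : k ∈ E <;> simp [proj, indicatorVec, hE]

theorem abs_indicatorVec_le_one (S : Finset ℕ) (k : ℕ) : |indicatorVec S k| ≤ 1 := by
  unfold indicatorVec
  split <;> simp

theorem supNorm_indicatorVec_le_one (S : Finset ℕ) : supNorm (indicatorVec S) ≤ 1 :=
  ciSup_le (abs_indicatorVec_le_one S)

theorem supNorm_indicatorVec_le_card (S : Finset ℕ) : supNorm (indicatorVec S) ≤ #S := by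
  refine ciSup_le fun k => ?_
  unfold indicatorVec
  split
  · rw [abs_one]
    exact_mod_cast card_pos.mpr ⟨k, ‹_›⟩
  · simp

theorem one_le_supNorm_indicatorVec {S : Finset ℕ} {a : ℕ} (ha : a ∈ S) :
    1 ≤ supNorm (indicatorVec S) := by
  have hbdd : BddAbove (Set.range fun k => |indicatorVec S k|) :=
    ⟨1, Set.forall_mem_range.mpr (abs_indicatorVec_le_one S)⟩
  exact le_of_eq_of_le (by simp [indicatorVec, ha]) (le_ciSup hbdd a)

namespace Adm1

variable {d : ℕ} {E : Fin d → Finset ℕ}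

theorem pairwise_disjoint (hE : Adm1 d E) : Pairwise fun p q => Disjoint (E p) (E q) := by
  intro p q hpq
  rw [Finset.disjoint_left]
  intro a hap haq
  rcases lt_or_gt_of_ne hpq with hlt | hlt
  · exact lt_irrefl a (hE.2.1 p q hlt a hap a haq)
  · exact lt_irrefl a (hE.2.1 q p hlt a haq a hap)

theorem sum_card_inter_le (hE : Adm1 d E) (S : Finset ℕ) :
    ∑ k, (#(E k ∩ S) : ℝ) ≤ #S := by
  classical
  have hdisj : (↑(univ : Finset (Fin d)) : Set (Fin d)).PairwiseDisjoint (fun k => E k ∩ S) :=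
    fun p _ q _ hpq => (hE.pairwise_disjoint hpq).mono inter_subset_left inter_subset_left
  have hcard : ∑ k, #(E k ∩ S) ≤ #S := by
    rw [← card_biUnion hdisj]
    exact card_le_card (biUnion_subset.mpr fun k _ => inter_subset_right)
  exact_mod_cast hcard

end Adm1

theorem adm1_zero : Adm1 0 Fin.elim0 :=
  ⟨fun p => p.elim0, fun p => p.elim0, fun p => p.elim0⟩

section Tsirelson

variable {θ : ℝ}

def admissibleSums (θ : ℝ) (n : ℕ) (x : ℕ → ℝ) : Set ℝ :=
  {r : ℝ | ∃ d : ℕ, ∃ E : Fin d → Finset ℕ, Adm1 d E ∧ r = θ * ∑ k, tns θ n (proj (E k) x)}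

theorem tns_succ (n : ℕ) (x : ℕ → ℝ) :
    tns θ (n + 1) x = max (tns θ n x) (sSup (admissibleSums θ n x)) :=
  rfl

theorem tns_succ_le {n : ℕ} {x : ℕ → ℝ} {c : ℝ} (hn : tns θ n x ≤ c)
    (hsums : ∀ d (E : Fin d → Finset ℕ), Adm1 d E → θ * ∑ k, tns θ n (proj (E k) x) ≤ c) :
    tns θ (n + 1) x ≤ c := by
  rw [tns_succ]
  refine max_le hn (csSup_le ⟨_, 0, Fin.elim0, adm1_zero, rfl⟩ ?_)
  rintro _ ⟨d, E, hE, rfl⟩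
  exact hsums d E hE

theorem le_tns_succ {n : ℕ} {x : ℕ → ℝ} (hbdd : BddAbove (admissibleSums θ n x))
    {d : ℕ} {E : Fin d → Finset ℕ} (hE : Adm1 d E) :
    θ * ∑ k, tns θ n (proj (E k) x) ≤ tns θ (n + 1) x :=
  (le_csSup hbdd ⟨d, E, hE, rfl⟩).trans (le_max_right _ _)

theorem tnorm_eq_of_forall_le {x : ℕ → ℝ} {c : ℝ} (hle : ∀ n, tns θ n x ≤ c) {m : ℕ}
    (hge : c ≤ tns θ m x) : tnorm θ x = c :=
  le_antisymm (ciSup_le hle) (hge.trans (le_ciSup ⟨c, Set.forall_mem_range.mpr hle⟩ m))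

theorem sum_tns_proj_indicatorVec_le {n : ℕ}
    (ih : ∀ T : Finset ℕ, tns θ n (indicatorVec T) ≤ #T) {d : ℕ} {E : Fin d → Finset ℕ}
    (hE : Adm1 d E) (S : Finset ℕ) :
    ∑ k, tns θ n (proj (E k) (indicatorVec S)) ≤ #S := by
  simp only [proj_indicatorVec]
  exact (sum_le_sum fun k _ => ih (E k ∩ S)).trans (hE.sum_card_inter_le S)

theorem tns_indicatorVec_le_card (hθ0 : 0 ≤ θ) (hθ1 : θ ≤ 1) (n : ℕ) (S : Finset ℕ) :
    tns θ n (indicatorVec S) ≤ #S := by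
  induction n generalizing S with
  | zero => exact supNorm_indicatorVec_le_card S
  | succ n ih =>
    refine tns_succ_le (ih S) fun d E hE => ?_
    calc θ * ∑ k, tns θ n (proj (E k) (indicatorVec S))
        ≤ θ * #S := mul_le_mul_of_nonneg_left (sum_tns_proj_indicatorVec_le ih hE S) hθ0
      _ ≤ #S := mul_le_of_le_one_left (Nat.cast_nonneg _) hθ1

theorem mul_sum_tns_proj_indicatorVec_le (hθ0 : 0 ≤ θ) (hθ1 : θ ≤ 1) (n : ℕ)
    {d : ℕ} {E : Fin d → Finset ℕ} (hE : Adm1 d E) (S : Finset ℕ) :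
    θ * ∑ k, tns θ n (proj (E k) (indicatorVec S)) ≤ θ * #S :=
  mul_le_mul_of_nonneg_left
    (sum_tns_proj_indicatorVec_le (tns_indicatorVec_le_card hθ0 hθ1 n) hE S) hθ0

theorem bddAbove_admissibleSums_indicatorVec (hθ0 : 0 ≤ θ) (hθ1 : θ ≤ 1) (n : ℕ)
    (S : Finset ℕ) : BddAbove (admissibleSums θ n (indicatorVec S)) := by
  refine ⟨θ * #S, ?_⟩
  rintro _ ⟨d, E, hE, rfl⟩
  exact mul_sum_tns_proj_indicatorVec_le hθ0 hθ1 n hE S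

theorem tns_indicatorVec_le_max (hθ0 : 0 ≤ θ) (hθ1 : θ ≤ 1) (n : ℕ) (S : Finset ℕ) :
    tns θ n (indicatorVec S) ≤ max 1 (θ * #S) := by
  induction n with
  | zero => exact (supNorm_indicatorVec_le_one S).trans (le_max_left _ _)
  | succ n ih =>
    exact tns_succ_le ih fun d E hE =>
      (mul_sum_tns_proj_indicatorVec_le hθ0 hθ1 n hE S).trans (le_max_right _ _)

theorem tns_indicatorVec_le_card_sub_one (hθ0 : 0 ≤ θ) (hθ : θ ≤ 1 / 2) (n : ℕ)
    {S : Finset ℕ} (hS : 2 ≤ #S) : tns θ n (indicatorVec S) ≤ #S - 1 := by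
  have hS' : (2 : ℝ) ≤ #S := by exact_mod_cast hS
  refine (tns_indicatorVec_le_max hθ0 (by linarith) n S).trans (max_le (by linarith) ?_)
  nlinarith

theorem sum_tns_indicatorVec_inter_insert_le (hθ0 : 0 ≤ θ) (hθ : θ ≤ 1 / 2) (n : ℕ)
    {i : ℕ} {A : Finset ℕ} (hiA : i ∉ A) (hi : i ≤ #A) {d : ℕ} {E : Fin d → Finset ℕ}
    (hE : Adm1 d E) : ∑ k, tns θ n (indicatorVec (E k ∩ insert i A)) ≤ #A := by
  set S := insert i A
  have hθ1 : θ ≤ 1 := by linarith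
  have hcard := tns_indicatorVec_le_card hθ0 hθ1 n
  by_cases hcov : ∃ k, i ∈ E k
  · obtain ⟨k₀, hk₀⟩ := hcov
    have hd : d ≤ #A := (hE.2.2 k₀ i hk₀).trans hi
    by_cases hbig : ∃ k, 2 ≤ #(E k ∩ S)
    · obtain ⟨k₁, hk₁⟩ := hbig
      have hsum : ∑ k, (#(E k ∩ S) : ℝ) ≤ #A + 1 := by
        simpa [S, card_insert_of_notMem hiA] using hE.sum_card_inter_le S
      calc ∑ k, tns θ n (indicatorVec (E k ∩ S))
          ≤ ∑ k, ((#(E k ∩ S) : ℝ) - if k = k₁ then 1 else 0) := by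
            refine sum_le_sum fun k _ => ?_
            split
            · subst k
              exact tns_indicatorVec_le_card_sub_one hθ0 hθ n hk₁
            · simpa using hcard _
        _ ≤ #A := by simp only [sum_sub_distrib, sum_ite_eq', mem_univ, if_true]; linarith
    · push Not at hbig
      calc ∑ k, tns θ n (indicatorVec (E k ∩ S)) ≤ ∑ _k : Fin d, (1 : ℝ) :=
            sum_le_sum fun k _ => (hcard _).trans (by exact_mod_cast Nat.le_of_lt_succ (hbig k))
        _ ≤ #A := by simpa using hd
  · push Not at hcov
    have hEA : ∀ k, E k ∩ S = E k ∩ A := fun k => by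
      rw [inter_insert_of_notMem (hcov k)]
    simp only [hEA, ← proj_indicatorVec]
    exact sum_tns_proj_indicatorVec_le hcard hE A

theorem tns_indicatorVec_insert_le (hθ0 : 0 ≤ θ) (hθ : θ ≤ 1 / 2) {i : ℕ} {A : Finset ℕ}
    (hiA : i ∉ A) (hi : i ≤ #A) (hA : 1 ≤ θ * #A) (n : ℕ) :
    tns θ n (indicatorVec (insert i A)) ≤ θ * #A := by
  induction n with
  | zero => exact (supNorm_indicatorVec_le_one _).trans hA
  | succ n ih =>
    refine tns_succ_le ih fun d E hE => mul_le_mul_of_nonneg_left ?_ hθ0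
    simp only [proj_indicatorVec]
    exact sum_tns_indicatorVec_inter_insert_le hθ0 hθ n hiA hi hE

theorem mul_card_le_tns_one_indicatorVec (hθ0 : 0 ≤ θ) (hθ1 : θ ≤ 1) {A S : Finset ℕ}
    (hAS : A ⊆ S) (hA : ∀ a ∈ A, #A ≤ a) : θ * #A ≤ tns θ 1 (indicatorVec S) := by
  let e := A.orderEmbOfFin rfl
  have hE : Adm1 #A fun k => {e k} := by
    refine ⟨fun k => singleton_nonempty _, ?_, ?_⟩
    · intro p q hpq a ha b hb
      rw [mem_singleton] at ha hb
      exact ha ▸ hb ▸ e.strictMono hpq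
    · intro k a ha
      rw [mem_singleton] at ha
      exact ha ▸ hA _ (A.orderEmbOfFin_mem rfl k)
  have hone : ∀ k, 1 ≤ tns θ 0 (proj {e k} (indicatorVec S)) := fun k => by
    rw [proj_indicatorVec]
    exact one_le_supNorm_indicatorVec
      (mem_inter.mpr ⟨mem_singleton_self _, hAS (A.orderEmbOfFin_mem rfl k)⟩)
  calc θ * #A = θ * ∑ _k : Fin #A, (1 : ℝ) := by simp
    _ ≤ θ * ∑ k, tns θ 0 (proj {e k} (indicatorVec S)) :=
      mul_le_mul_of_nonneg_left (sum_le_sum fun k _ => hone k) hθ0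
    _ ≤ tns θ 1 (indicatorVec S) :=
      le_tns_succ (bddAbove_admissibleSums_indicatorVec hθ0 hθ1 0 S) hE

end Tsirelson

theorem stmt9_general (θ : ℝ) (h0 : 0 < θ) (h : θ ≤ 1/2) (i : ℕ)
    (A : Finset ℕ) (hgt : ∀ a ∈ A, i < a)
    (hS1 : ∀ a ∈ A, A.card ≤ a) (hbig : ⌈θ⁻¹⌉₊ ≤ A.card)
    (hnot : ¬ (∀ a ∈ insert i A, (insert i A).card ≤ a)) :
    tnorm θ (Pi.single i (1 : ℝ) + ∑ j ∈ A, Pi.single j (1 : ℝ)) = θ * A.card := by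
  have hiA : i ∉ A := fun hi => lt_irrefl i (hgt i hi)
  have hi : i ≤ #A := by
    push Not at hnot
    obtain ⟨a, ha, hlt⟩ := hnot
    rw [card_insert_of_notMem hiA] at hlt
    rcases mem_insert.mp ha with rfl | ha
    · omega
    · have := hgt a ha; omega
  have hA : 1 ≤ θ * #A :=
    (inv_le_iff_one_le_mul₀' h0).mp (Nat.ceil_le.mp hbig)
  rw [show Pi.single i 1 + ∑ j ∈ A, Pi.single j 1 = indicatorVec (insert i A) by
    rw [indicatorVec_eq_sum_single, sum_insert hiA]]
  exact tnorm_eq_of_forall_le (tns_indicatorVec_insert_le h0.le h hiA hi hA)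
    (m := 1) (mul_card_le_tns_one_indicatorVec h0.le (by linarith) (subset_insert i A) hS1)

theorem stmt9 (θ : ℝ) (h0 : 0 < θ) (h : θ ≤ 1/2) (i : ℕ) (hi : 1 ≤ i)
    (A : Finset ℕ) (hAne : A.Nonempty) (hgt : ∀ a ∈ A, i < a)
    (hS1 : ∀ a ∈ A, A.card ≤ a) (hbig : ⌈θ⁻¹⌉₊ ≤ A.card)
    (hnot : ¬ (∀ a ∈ insert i A, (insert i A).card ≤ a)) :
    tnorm θ (Pi.single i (1 : ℝ) + ∑ j ∈ A, Pi.single j (1 : ℝ)) = θ * A.card :=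
  stmt9_general θ h0 h i A hgt hS1 hbig hnot
end
end

section
/- Let θ = 10/21 (so θ^{-1} = 2.1 and ⌈θ^{-1}⌉ = 3). In T[θ, S_1]: (a) the vector x = e_1 + e_4 + e_5 has norm ‖x‖ = 1; (b) the vector y = e_3 + e_4 + e_5 has norm ‖y‖ = 30/21 = 10/7. Consequently, the linear map U determined by U e_1 = e_3, U e_2 = e_2, U e_3 = e_1, U e_i = e_i for i ≥ 4 is not an isometry of T[θ, S_1], even though it permutes the first ⌈θ^{-1}⌉ unit vectors. -/
open Finset

noncomputable section

/-- auxiliary: indicator of a finite set -/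
def ind (S : Finset ℕ) : ℕ → ℝ := fun i => if i ∈ S then 1 else 0

lemma proj_ind (E S : Finset ℕ) : proj E (ind S) = ind (S ∩ E) := by
  funext i
  simp only [proj, ind, Finset.mem_inter]
  split_ifs <;> tauto

lemma abs_ind_le (S : Finset ℕ) (i : ℕ) : |ind S i| ≤ 1 := by
  unfold ind; split_ifs <;> simp

lemma supNorm_ind_le (S : Finset ℕ) : supNorm (ind S) ≤ 1 := by
  refine ciSup_le fun i => ?_
  exact abs_ind_le S i

lemma one_le_supNorm {S : Finset ℕ} {a : ℕ} (h : a ∈ S) : 1 ≤ supNorm (ind S) := by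
  have h1 : |ind S a| = 1 := by simp [ind, h]
  calc (1:ℝ) = |ind S a| := h1.symm
    _ ≤ ⨆ i, |ind S i| := le_ciSup (f := fun i => |ind S i|)
      ⟨1, by rintro r ⟨i, rfl⟩; exact abs_ind_le S i⟩ a

lemma tns_empty : ∀ n, tns (10/21) n (ind ∅) ≤ 0 := by
  intro n
  induction n with
  | zero =>
    refine ciSup_le fun i => ?_
    simp [ind]
  | succ n ih =>
    refine max_le ih (Real.sSup_le ?_ le_rfl)
    rintro r ⟨d, E, hE, rfl⟩
    have h : ∀ i : Fin d, tns (10/21) n (proj (E i) (ind ∅)) ≤ 0 := by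
      intro i
      rw [proj_ind]
      simpa using ih
    have hsum : ∑ i : Fin d, tns (10/21) n (proj (E i) (ind ∅)) ≤ 0 :=
      Finset.sum_nonpos fun i _ => h i
    nlinarith

lemma adm_disjoint {d : ℕ} {E : Fin d → Finset ℕ} (hE : Adm1 d E) {i j : Fin d}
    (hij : i ≠ j) : Disjoint (E i) (E j) := by
  rw [Finset.disjoint_left]
  intro a hai haj
  rcases lt_or_gt_of_ne hij with h | h
  · exact lt_irrefl a (hE.2.1 i j h a hai a haj)
  · exact lt_irrefl a (hE.2.1 j i h a haj a hai)

lemma sum_card_inter {d : ℕ} {E : Fin d → Finset ℕ} (hE : Adm1 d E) (S : Finset ℕ) :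
    ∑ i : Fin d, (S ∩ E i).card ≤ (S ∩ Finset.univ.biUnion E).card := by
  have hdisj : ∀ i ∈ (univ : Finset (Fin d)), ∀ j ∈ univ, i ≠ j →
      Disjoint (S ∩ E i) (S ∩ E j) := by
    intro i _ j _ hij
    exact Finset.disjoint_of_subset_left Finset.inter_subset_right
      (Finset.disjoint_of_subset_right Finset.inter_subset_right (adm_disjoint hE hij))
  rw [← Finset.card_biUnion hdisj]
  apply Finset.card_le_card
  intro a ha
  simp only [Finset.mem_biUnion, Finset.mem_inter, Finset.mem_univ, true_and] at ha ⊢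
  tauto

/-- "Good" sets: meet any set of indices ≥ 2 in at most 2 points. -/
def Good (S : Finset ℕ) : Prop := ∀ E : Finset ℕ, (∀ a ∈ E, 2 ≤ a) → (S ∩ E).card ≤ 2

lemma Good.mono {S T : Finset ℕ} (h : Good S) (hsub : T ⊆ S) : Good T := fun E hE =>
  le_trans (Finset.card_le_card (Finset.inter_subset_inter hsub le_rfl)) (h E hE)

lemma tns_good : ∀ n (S : Finset ℕ), Good S → tns (10/21) n (ind S) ≤ 1 := by
  intro n
  induction n with
  | zero => intro S _; exact supNorm_ind_le S
  | succ n ih =>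
    intro S hS
    refine max_le (ih S hS) (Real.sSup_le ?_ zero_le_one)
    rintro r ⟨d, E, hE, rfl⟩
    have hterm : ∀ T : Finset ℕ, Good T → tns (10/21) n (ind T) ≤ (T.card : ℝ) := by
      intro T hT
      rcases T.eq_empty_or_nonempty with rfl | hne
      · simpa using tns_empty n
      · refine le_trans (ih T hT) ?_
        have h1 : 1 ≤ T.card := Finset.card_pos.mpr hne
        exact_mod_cast h1
    rcases d with _ | _ | d
    · simp
    · have hsum : ∑ i, tns (10/21) n (proj (E i) (ind S)) =
          tns (10/21) n (ind (S ∩ E 0)) := by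
        rw [← proj_ind]
        exact Fin.sum_univ_one _
      rw [hsum]
      have h1 := ih (S ∩ E 0) (hS.mono Finset.inter_subset_left)
      nlinarith
    ·
      have hproj : ∀ i : Fin (d+2), proj (E i) (ind S) = ind (S ∩ E i) := fun i => proj_ind _ _
      simp only [hproj]
      have hsum : ∑ i : Fin (d+2), tns (10/21) n (ind (S ∩ E i)) ≤
          ∑ i : Fin (d+2), ((S ∩ E i).card : ℝ) :=
        Finset.sum_le_sum fun i _ => hterm _ (hS.mono Finset.inter_subset_left)
      have hcount : (∑ i : Fin (d+2), ((S ∩ E i).card : ℝ)) ≤ 2 := by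
        have h1 := sum_card_inter hE S
        have h2 : (S ∩ Finset.univ.biUnion E).card ≤ 2 := by
          apply hS
          intro a ha
          simp only [Finset.mem_biUnion, Finset.mem_univ, true_and] at ha
          obtain ⟨i, hi⟩ := ha
          have := hE.2.2 i a hi
          omega
        have : ∑ i : Fin (d+2), (S ∩ E i).card ≤ 2 := le_trans h1 h2
        exact_mod_cast this
      nlinarith

lemma good_of_card_le {S : Finset ℕ} (h : S.card ≤ 2) : Good S := fun E _ =>
  le_trans (Finset.card_le_card Finset.inter_subset_left) h

lemma y_set_le (n : ℕ) (hn : tns (10/21) n (ind {3,4,5}) ≤ 10/7)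
    {d : ℕ} {E : Fin d → Finset ℕ} (hE : Adm1 d E) :
    (10/21) * ∑ i, tns (10/21) n (proj (E i) (ind {3,4,5})) ≤ 10/7 := by
  have hproj : ∀ i : Fin d, proj (E i) (ind {3,4,5}) = ind ({3,4,5} ∩ E i) :=
    fun i => proj_ind _ _
  simp only [hproj]
  by_cases hex : ∃ i, ({3,4,5} : Finset ℕ) ⊆ E i
  · obtain ⟨i₀, hi₀⟩ := hex
    have hsum : ∑ i : Fin d, tns (10/21) n (ind ({3,4,5} ∩ E i)) ≤
        ∑ i : Fin d, (if i = i₀ then (10/7 : ℝ) else 0) := by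
      refine Finset.sum_le_sum fun i _ => ?_
      by_cases hi : i = i₀
      · subst hi
        rw [Finset.inter_eq_left.mpr hi₀, if_pos rfl]
        exact hn
      · rw [if_neg hi]
        have hemp : ({3,4,5} : Finset ℕ) ∩ E i = ∅ := by
          rw [Finset.eq_empty_iff_forall_notMem]
          intro a ha
          rw [Finset.mem_inter] at ha
          exact (Finset.disjoint_left.mp (adm_disjoint hE hi) ha.2) (hi₀ ha.1)
        rw [hemp]
        exact tns_empty n
    rw [Finset.sum_ite_eq' Finset.univ i₀ (fun _ => (10/7:ℝ))] at hsum
    simp only [Finset.mem_univ, if_true] at hsum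
    nlinarith
  · push_neg at hex
    have hgood : ∀ i : Fin d, tns (10/21) n (ind ({3,4,5} ∩ E i)) ≤
        ((({3,4,5} : Finset ℕ) ∩ E i).card : ℝ) := by
      intro i
      rcases (({3,4,5} : Finset ℕ) ∩ E i).eq_empty_or_nonempty with he | hne
      · rw [he]; simpa using tns_empty n
      · have hsub : ({3,4,5} : Finset ℕ) ∩ E i ⊆ {3,4,5} := Finset.inter_subset_left
        have hne' : ({3,4,5} : Finset ℕ) ∩ E i ≠ {3,4,5} := fun hcontra =>
          hex i (Finset.inter_eq_left.mp hcontra)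
        have hss : ({3,4,5} : Finset ℕ) ∩ E i ⊂ {3,4,5} := ssubset_of_subset_of_ne hsub hne'
        have hcard : (({3,4,5} : Finset ℕ) ∩ E i).card ≤ 2 := by
          have := Finset.card_lt_card hss
          have h3 : ({3,4,5} : Finset ℕ).card = 3 := by decide
          omega
        refine le_trans (tns_good n _ (good_of_card_le hcard)) ?_
        have h1 : 1 ≤ (({3,4,5} : Finset ℕ) ∩ E i).card := Finset.card_pos.mpr hne
        exact_mod_cast h1
    have hsum : ∑ i : Fin d, tns (10/21) n (ind ({3,4,5} ∩ E i)) ≤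
        ∑ i : Fin d, ((({3,4,5} : Finset ℕ) ∩ E i).card : ℝ) :=
      Finset.sum_le_sum fun i _ => hgood i
    have hcount : (∑ i : Fin d, ((({3,4,5} : Finset ℕ) ∩ E i).card : ℝ)) ≤ 3 := by
      have h1 := sum_card_inter hE ({3,4,5} : Finset ℕ)
      have h2 : (({3,4,5} : Finset ℕ) ∩ Finset.univ.biUnion E).card ≤ 3 := by
        refine le_trans (Finset.card_le_card Finset.inter_subset_left) ?_
        decide
      have : ∑ i : Fin d, (({3,4,5} : Finset ℕ) ∩ E i).card ≤ 3 := le_trans h1 h2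
      exact_mod_cast this
    nlinarith

lemma tns_y_le : ∀ n, tns (10/21) n (ind {3,4,5}) ≤ 10/7 := by
  intro n
  induction n with
  | zero => exact le_trans (supNorm_ind_le _) (by norm_num)
  | succ n ih =>
    refine max_le ih (Real.sSup_le ?_ (by norm_num))
    rintro r ⟨d, E, hE, rfl⟩
    exact y_set_le n ih hE

lemma good145 : Good {1,4,5} := by
  intro E hE
  have hsub : ({1,4,5} : Finset ℕ) ∩ E ⊆ {4,5} := by
    intro a ha
    rw [Finset.mem_inter] at ha
    have h2 := hE a ha.2
    have h1 := ha.1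
    simp only [Finset.mem_insert, Finset.mem_singleton] at h1 ⊢
    omega
  exact le_trans (Finset.card_le_card hsub) (by decide)

lemma supNorm_ind_eq {S : Finset ℕ} {a : ℕ} (h : a ∈ S) : supNorm (ind S) = 1 :=
  le_antisymm (supNorm_ind_le S) (one_le_supNorm h)

lemma tnorm_x : tnorm (10/21) (ind {1,4,5}) = 1 := by
  have bdd : BddAbove (Set.range fun n => tns (10/21) n (ind {1,4,5})) :=
    ⟨1, by rintro r ⟨n, rfl⟩; exact tns_good n _ good145⟩
  refine le_antisymm (ciSup_le fun n => tns_good n _ good145) ?_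
  calc (1:ℝ) = supNorm (ind {1,4,5}) := (supNorm_ind_eq (by decide : (1:ℕ) ∈ ({1,4,5}:Finset ℕ))).symm
    _ = tns (10/21) 0 (ind {1,4,5}) := rfl
    _ ≤ tnorm (10/21) (ind {1,4,5}) := le_ciSup bdd 0

lemma tnorm_y : tnorm (10/21) (ind {3,4,5}) = 10/7 := by
  have bdd : BddAbove (Set.range fun n => tns (10/21) n (ind {3,4,5})) :=
    ⟨10/7, by rintro r ⟨n, rfl⟩; exact tns_y_le n⟩
  refine le_antisymm (ciSup_le fun n => tns_y_le n) ?_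
  have hA : BddAbove {r : ℝ | ∃ d : ℕ, ∃ E : Fin d → Finset ℕ, Adm1 d E ∧
      r = (10/21) * ∑ i, tns (10/21) 0 (proj (E i) (ind {3,4,5}))} := by
    refine ⟨10/7, ?_⟩
    rintro r ⟨d, E, hE, rfl⟩
    exact y_set_le 0 (tns_y_le 0) hE
  have hadm : Adm1 3 ![{3},{4},{5}] := by
    refine ⟨?_, ?_, ?_⟩ <;> decide
  have hmem : (10/7 : ℝ) ∈ {r : ℝ | ∃ d : ℕ, ∃ E : Fin d → Finset ℕ, Adm1 d E ∧
      r = (10/21) * ∑ i, tns (10/21) 0 (proj (E i) (ind {3,4,5}))} := by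
    refine ⟨3, ![{3},{4},{5}], hadm, ?_⟩
    rw [Fin.sum_univ_three]
    simp only [Matrix.cons_val_zero, Matrix.cons_val_one, Matrix.head_cons,
      Matrix.cons_val_two, Matrix.tail_cons]
    simp only [proj_ind]
    rw [show tns (10/21) 0 = supNorm from rfl]
    rw [supNorm_ind_eq (show (3:ℕ) ∈ ({3,4,5}:Finset ℕ) ∩ {3} by decide),
      supNorm_ind_eq (show (4:ℕ) ∈ ({3,4,5}:Finset ℕ) ∩ {4} by decide),
      supNorm_ind_eq (show (5:ℕ) ∈ ({3,4,5}:Finset ℕ) ∩ {5} by decide)]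
    norm_num
  have h1 := le_csSup hA hmem
  have h2 : tns (10/21) 1 (ind {3,4,5}) = max (tns (10/21) 0 (ind {3,4,5}))
      (sSup {r : ℝ | ∃ d : ℕ, ∃ E : Fin d → Finset ℕ, Adm1 d E ∧
        r = (10/21) * ∑ i, tns (10/21) 0 (proj (E i) (ind {3,4,5}))}) := rfl
  calc (10/7:ℝ) ≤ sSup {r : ℝ | ∃ d : ℕ, ∃ E : Fin d → Finset ℕ, Adm1 d E ∧
        r = (10/21) * ∑ i, tns (10/21) 0 (proj (E i) (ind {3,4,5}))} := h1
    _ ≤ tns (10/21) 1 (ind {3,4,5}) := by rw [h2]; exact le_max_right _ _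
    _ ≤ tnorm (10/21) (ind {3,4,5}) := le_ciSup bdd 1

lemma hx_eq : (Pi.single 1 (1:ℝ) + Pi.single 4 1 + Pi.single 5 1) = ind {1,4,5} := by
  funext i
  simp only [Pi.add_apply, Pi.single_apply, ind, Finset.mem_insert, Finset.mem_singleton]
  split_ifs <;> first | (exfalso; omega) | norm_num

lemma hy_eq : (Pi.single 3 (1:ℝ) + Pi.single 4 1 + Pi.single 5 1) = ind {3,4,5} := by
  funext i
  simp only [Pi.add_apply, Pi.single_apply, ind, Finset.mem_insert, Finset.mem_singleton]
  split_ifs <;> first | (exfalso; omega) | norm_num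

theorem stmt12 :
    tnorm (10/21) (Pi.single 1 (1 : ℝ) + Pi.single 4 1 + Pi.single 5 1) = 1 ∧
    tnorm (10/21) (Pi.single 3 (1 : ℝ) + Pi.single 4 1 + Pi.single 5 1) = 10/7 ∧
    ¬ (∀ z : ℕ → ℝ, (Function.support z).Finite →
        tnorm (10/21) (fun n => z (Equiv.swap 1 3 n)) = tnorm (10/21) z) := by
  refine ⟨by rw [hx_eq]; exact tnorm_x, by rw [hy_eq]; exact tnorm_y, ?_⟩
  intro h
  have hfin : (Function.support ((Pi.single 3 (1:ℝ) + Pi.single 4 1 + Pi.single 5 1 : ℕ → ℝ))).Finite := by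
    rw [hy_eq]
    apply Set.Finite.subset (({3,4,5} : Finset ℕ)).finite_toSet
    intro i hi
    rw [Function.mem_support] at hi
    by_contra hns
    apply hi
    simp only [ind, if_neg (fun hmem => hns (Finset.mem_coe.mpr hmem))]
  have key := h _ hfin
  have hswap : (fun n => ((Pi.single 3 (1:ℝ) + Pi.single 4 1 + Pi.single 5 1 : ℕ → ℝ)) (Equiv.swap 1 3 n))
      = ((Pi.single 1 (1:ℝ) + Pi.single 4 1 + Pi.single 5 1 : ℕ → ℝ)) := by
    funext n
    simp only [Pi.add_apply, Pi.single_apply, Equiv.swap_apply_def]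
    split_ifs <;> first | (exfalso; omega) | norm_num
  rw [hswap, hx_eq, hy_eq, tnorm_x, tnorm_y] at key
  norm_num at key
end
end
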